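/- arXiv:2206.11957 — 2 statements merged into one kernel-verified Lean document; each statement's English description precedes it below -/
import Mathlib

section
/- Let c₁, ..., cₙ > 0 and let Q₁ be the n×n symmetric matrix with Q₁[1,1] = (n−2)/c₁², Q₁[1,j] = Q₁[j,1] = −1/(c₁cⱼ) for j ≥ 2, Q₁[j,j] = 1/cⱼ² for j ≥ 2, and all other entries zero. Then det(Q₁) = −∏ₖ₌₁ⁿ 1/cₖ². -/
/-- det(Q₁) = −∏ₖ 1/cₖ² for the arrowhead matrix Q₁ with
Q₁[1,1] = (n−2)/c₁², Q₁[1,j] = Q₁[j,1] = −1/(c₁cⱼ), Q₁[j,j] = 1/cⱼ²,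
stated here in dimension n + 1. -/
theorem det_Q1 (n : ℕ) (c : Fin (n + 1) → ℝ) (hc : ∀ i, 0 < c i)
    (Q : Matrix (Fin (n + 1)) (Fin (n + 1)) ℝ)
    (hQ : ∀ i j : Fin (n + 1),
      Q i j = if i = 0 ∧ j = 0 then ((n : ℝ) + 1 - 2) / (c 0) ^ 2
        else if i = 0 then -1 / (c 0 * c j)
        else if j = 0 then -1 / (c 0 * c i)
        else if i = j then 1 / (c i) ^ 2 else 0) :
    Q.det = -∏ k, 1 / (c k) ^ 2 := by
  have hc0 : c 0 ≠ 0 := (hc 0).ne'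
  set c' : Fin n → ℝ := fun j => c j.succ with hc'def
  have hc'ne : ∀ j, c' j ≠ 0 := fun j => (hc j.succ).ne'
  set A : Matrix (Fin 1) (Fin 1) ℝ :=
    Matrix.of (fun _ _ => ((n : ℝ) + 1 - 2) / (c 0) ^ 2) with hA
  set B : Matrix (Fin 1) (Fin n) ℝ :=
    Matrix.of (fun _ j => -1 / (c 0 * c' j)) with hB
  set C : Matrix (Fin n) (Fin 1) ℝ :=
    Matrix.of (fun j _ => -1 / (c 0 * c' j)) with hC
  set D : Matrix (Fin n) (Fin n) ℝ :=
    Matrix.diagonal (fun j => 1 / (c' j) ^ 2) with hD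
  set E : Matrix (Fin n) (Fin n) ℝ :=
    Matrix.diagonal (fun j => (c' j) ^ 2) with hE
  have hsq : ∀ j, (c' j) ^ 2 ≠ 0 := fun j => pow_ne_zero _ (hc'ne j)
  have hDE : D * E = 1 := by
    rw [hD, hE, Matrix.diagonal_mul_diagonal]
    have h1 : (fun j => 1 / c' j ^ 2 * c' j ^ 2) = fun _ => (1 : ℝ) := by
      funext j; rw [one_div, inv_mul_cancel₀ (hsq j)]
    rw [h1, Matrix.diagonal_one]
  have hED : E * D = 1 := by
    rw [hD, hE, Matrix.diagonal_mul_diagonal]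
    have h1 : (fun j => c' j ^ 2 * (1 / c' j ^ 2)) = fun _ => (1 : ℝ) := by
      funext j; rw [one_div, mul_inv_cancel₀ (hsq j)]
    rw [h1, Matrix.diagonal_one]
  haveI : Invertible D := ⟨E, hED, hDE⟩
  let e : Fin 1 ⊕ Fin n ≃ Fin (n + 1) :=
    finSumFinEquiv.trans (finCongr (Nat.add_comm 1 n))
  have he0 : ∀ i : Fin 1, e (Sum.inl i) = 0 := by
    intro i
    apply Fin.ext
    simp [e, finSumFinEquiv, Fin.castAdd, Fin.castLE, Fin.ext_iff, Fin.val_eq_zero i]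
  have heS : ∀ j : Fin n, e (Sum.inr j) = j.succ := by
    intro j
    apply Fin.ext
    simp [e, finSumFinEquiv, Fin.natAdd]
    omega
  have hQe : (Matrix.reindex e.symm e.symm) Q = Matrix.fromBlocks A B C D := by
    ext i j
    rcases i with i | i <;> rcases j with j | j <;>
      simp only [Matrix.reindex_apply, Matrix.submatrix_apply, Equiv.symm_symm, he0, heS,
        Matrix.fromBlocks_apply₁₁, Matrix.fromBlocks_apply₁₂, Matrix.fromBlocks_apply₂₁,
        Matrix.fromBlocks_apply₂₂, hQ]
    · simp [hA]
    · simp [hB, Fin.succ_ne_zero, hc'def]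
    · simp [hC, Fin.succ_ne_zero, hc'def]
    · by_cases h : i = j
      · subst h; simp [hD, Fin.succ_ne_zero, hc'def, Matrix.diagonal]
      · have : Fin.succ i ≠ Fin.succ j := fun hh => h (Fin.succ_injective _ hh)
        simp [hD, Fin.succ_ne_zero, this, h, Matrix.diagonal]
  have hdet : Q.det = (Matrix.fromBlocks A B C D).det := by
    rw [← hQe, Matrix.det_reindex_self]
  rw [hdet, Matrix.det_fromBlocks₂₂]
  have hinv : (⅟D : Matrix (Fin n) (Fin n) ℝ) = E := invOf_eq_right_inv hDE
  rw [hinv]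
  have hBEC : (B * E * C) 0 0 = (n : ℝ) / (c 0) ^ 2 := by
    rw [Matrix.mul_apply]
    have hterm : ∀ j : Fin n, (B * E) 0 j * C j 0 = 1 / (c 0) ^ 2 := by
      intro j
      have h1 : c' j ≠ 0 := hc'ne j
      rw [hE, Matrix.mul_diagonal]
      simp only [hB, hC, Matrix.of_apply]
      field_simp
    rw [Finset.sum_congr rfl (fun j _ => hterm j)]
    simp [Finset.sum_const, div_eq_mul_inv, mul_comm]
  have hSchur : (A - B * E * C).det = -1 / (c 0) ^ 2 := by
    rw [Matrix.det_fin_one]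
    simp only [Matrix.sub_apply, hBEC, hA, Matrix.of_apply]
    field_simp
    ring
  rw [hSchur, Matrix.det_diagonal]
  rw [Fin.prod_univ_succ (f := fun k => 1 / (c k) ^ 2)]
  rw [hc'def]
  ring
end

section
/- Let c₁, ..., cₙ > 0 and let Q₁ be the n×n symmetric arrowhead matrix with Q₁[1,1] = (n−2)/c₁², Q₁[1,j] = Q₁[j,1] = −1/(c₁cⱼ) for j ≥ 2, Q₁[j,j] = 1/cⱼ² for j ≥ 2, other entries zero. Then Q₁ has exactly n−1 positive eigenvalues and exactly one negative eigenvalue (inertia {n−1, 0, 1}). -/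
/-!
With `y = x / c`, the quadratic form of `Q₁` is `∑_{j ≥ 1} (y j - y 0)² - (y 0)²`. On the
hyperplane `x 0 = 0` it is the positive definite form `∑ (x j / c j)²`; since the eigenvectors of
two nonpositive eigenvalues would span a plane meeting that hyperplane, at most one eigenvalue is
`≤ 0`. At `x = c` the form equals `-1`, so some eigenvalue is negative.
-/

open Finset Matrix

namespace Matrix.IsHermitian

variable {ι : Type*} [Fintype ι] [DecidableEq ι] {A : Matrix ι ι ℝ} (hA : A.IsHermitian)

lemma dotProduct_eigenvectorBasis (i j : ι) :
    ⇑(hA.eigenvectorBasis i) ⬝ᵥ ⇑(hA.eigenvectorBasis j) = if i = j then 1 else 0 := by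
  simpa [EuclideanSpace.inner_eq_star_dotProduct, dotProduct_comm] using
    orthonormal_iff_ite.mp hA.eigenvectorBasis.orthonormal i j

lemma dotProduct_mulVec_eigenvectorBasis_pair {i j : ι} (hij : i ≠ j) (α β : ℝ) :
    (α • ⇑(hA.eigenvectorBasis i) + β • ⇑(hA.eigenvectorBasis j)) ⬝ᵥ
      A *ᵥ (α • ⇑(hA.eigenvectorBasis i) + β • ⇑(hA.eigenvectorBasis j)) =
    α ^ 2 * hA.eigenvalues i + β ^ 2 * hA.eigenvalues j := by
  simp only [mulVec_add, mulVec_smul, mulVec_eigenvectorBasis, dotProduct_add, add_dotProduct,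
    dotProduct_smul, smul_dotProduct, dotProduct_eigenvectorBasis, if_neg hij, if_neg hij.symm,
    if_pos, smul_eq_mul]
  ring

lemma card_eigenvalues_nonpos_le_one (f : (ι → ℝ) →ₗ[ℝ] ℝ)
    (hf : ∀ x, x ≠ 0 → f x = 0 → 0 < x ⬝ᵥ A *ᵥ x) :
    #{i | hA.eigenvalues i ≤ 0} ≤ 1 := by
  refine card_le_one.mpr fun i hi j hj => by_contra fun hij => ?_
  set v := ⇑(hA.eigenvectorBasis i)
  set w := ⇑(hA.eigenvectorBasis j)
  obtain ⟨α, β, hαβ, hfx⟩ : ∃ α β : ℝ, (α ≠ 0 ∨ β ≠ 0) ∧ f (α • v + β • w) = 0 := by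
    by_cases hv : f v = 0
    · exact ⟨1, 0, .inl one_ne_zero, by simp [hv]⟩
    · exact ⟨f w, -f v, .inr (neg_ne_zero.mpr hv), by simp; ring⟩
  have hx : α • v + β • w ≠ 0 := by
    intro h0
    have hα := congrArg (· ⬝ᵥ v) h0
    have hβ := congrArg (· ⬝ᵥ w) h0
    simp only [add_dotProduct, smul_dotProduct, v, w, dotProduct_eigenvectorBasis, if_neg hij,
      if_neg (Ne.symm hij), if_pos, smul_eq_mul, zero_dotProduct] at hα hβ
    rcases hαβ with h | h <;> simp_all
  have := hf _ hx hfx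
  rw [hA.dotProduct_mulVec_eigenvectorBasis_pair hij] at this
  simp only [mem_filter, mem_univ, true_and] at hi hj
  nlinarith [mul_nonpos_of_nonneg_of_nonpos (sq_nonneg α) hi,
    mul_nonpos_of_nonneg_of_nonpos (sq_nonneg β) hj]

lemma exists_eigenvalues_neg_of_dotProduct_mulVec_neg {x : ι → ℝ} (hx : x ⬝ᵥ A *ᵥ x < 0) :
    ∃ i, hA.eigenvalues i < 0 := by
  by_contra! h
  have hpsd : A.PosSemidef := hA.posSemidef_iff_eigenvalues_nonneg.mpr h
  simpa using (hpsd.dotProduct_mulVec_nonneg x).trans_lt hx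

end Matrix.IsHermitian

lemma card_filter_sign_of_card_nonpos_le_one {ι : Type*} [Fintype ι] {f : ι → ℝ}
    (hle : #{i | f i ≤ 0} ≤ 1) (hneg : ∃ i, f i < 0) :
    #{i | 0 < f i} = Fintype.card ι - 1 ∧ #{i | f i = 0} = 0 ∧ #{i | f i < 0} = 1 := by
  obtain ⟨i₀, hi₀⟩ := hneg
  have hnonpos : ∀ j, f j ≤ 0 ↔ j = i₀ := fun j =>
    ⟨fun hj => card_le_one.mp hle j (by simpa using hj) i₀ (by simpa using hi₀.le),
      fun h => h ▸ hi₀.le⟩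
  have hsplit : #{i | 0 < f i} + #{i | f i ≤ 0} = Fintype.card ι := by
    simpa only [not_lt, card_univ] using card_filter_add_card_filter_not (s := univ) (0 < f ·)
  rw [show ({i | f i ≤ 0} : Finset ι) = {i₀} by ext; simp [hnonpos], card_singleton] at hsplit
  refine ⟨by omega, card_eq_zero.mpr (filter_eq_empty_iff.mpr fun j _ hj => ?_),
    card_eq_one.mpr ⟨i₀, ext fun j => ?_⟩⟩
  · exact hi₀.ne ((hnonpos j).mp hj.le ▸ hj)
  · simpa using ⟨fun hj => (hnonpos j).mp hj.le, fun h => h ▸ hi₀⟩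

noncomputable def arrowheadQ₁ {n : ℕ} (c : Fin (n + 2) → ℝ) :
    Matrix (Fin (n + 2)) (Fin (n + 2)) ℝ :=
  of fun i j =>
    if i = 0 ∧ j = 0 then (n : ℝ) / c 0 ^ 2
    else if i = 0 then -1 / (c 0 * c j)
    else if j = 0 then -1 / (c 0 * c i)
    else if i = j then 1 / c i ^ 2 else 0

namespace arrowheadQ₁

variable {n : ℕ} (c : Fin (n + 2) → ℝ)

lemma dotProduct_mulVec (x : Fin (n + 2) → ℝ) :
    x ⬝ᵥ arrowheadQ₁ c *ᵥ x =
      ∑ j : Fin (n + 1), (x j.succ / c j.succ - x 0 / c 0) ^ 2 - (x 0 / c 0) ^ 2 := by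
  have hterm : ∀ j : Fin (n + 1),
      x 0 * (-1 / (c 0 * c j.succ) * x j.succ) +
        x j.succ * (-1 / (c 0 * c j.succ) * x 0 + 1 / c j.succ ^ 2 * x j.succ) =
      (x j.succ / c j.succ - x 0 / c 0) ^ 2 - (x 0 / c 0) ^ 2 := fun j => by ring
  simp only [dotProduct, mulVec, Fin.sum_univ_succ (n := n + 1), arrowheadQ₁, of_apply,
    Fin.succ_ne_zero, Fin.succ_inj, and_self, and_false, false_and, if_true, if_false, ite_mul,
    zero_mul, sum_ite_eq, mem_univ]
  rw [mul_add, mul_sum, add_assoc, ← sum_add_distrib]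
  simp only [hterm, sum_sub_distrib, sum_const, card_univ, Fintype.card_fin, nsmul_eq_mul]
  push_cast
  ring

variable {c}

lemma dotProduct_mulVec_pos (hc : ∀ i, c i ≠ 0) {x : Fin (n + 2) → ℝ} (hx : x ≠ 0)
    (hx₀ : x 0 = 0) : 0 < x ⬝ᵥ arrowheadQ₁ c *ᵥ x := by
  obtain ⟨k, hk⟩ := Function.ne_iff.mp hx
  obtain ⟨j, rfl⟩ := Fin.exists_succ_eq.mpr (show k ≠ 0 by rintro rfl; exact hk hx₀)
  rw [dotProduct_mulVec, hx₀]
  simp only [zero_div, sub_zero, ne_eq, OfNat.ofNat_ne_zero, not_false_eq_true, zero_pow]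
  exact sum_pos' (fun _ _ => sq_nonneg _)
    ⟨j, mem_univ j, sq_pos_of_ne_zero (div_ne_zero hk (hc _))⟩

lemma dotProduct_mulVec_self_neg (hc : ∀ i, c i ≠ 0) : c ⬝ᵥ arrowheadQ₁ c *ᵥ c < 0 := by
  simp [dotProduct_mulVec, hc]

end arrowheadQ₁

open Finset in
/-- the arrowhead matrix Q₁ (dimension n + 2, so n + 2 ≥ 2) has
inertia {n+1, 0, 1}: exactly n+1 positive eigenvalues and exactly one negative
eigenvalue. -/
theorem inertia_Q1 (n : ℕ) (c : Fin (n + 2) → ℝ) (hc : ∀ i, 0 < c i)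
    (Q : Matrix (Fin (n + 2)) (Fin (n + 2)) ℝ)
    (hQ : ∀ i j : Fin (n + 2),
      Q i j = if i = 0 ∧ j = 0 then ((n : ℝ) + 2 - 2) / (c 0) ^ 2
        else if i = 0 then -1 / (c 0 * c j)
        else if j = 0 then -1 / (c 0 * c i)
        else if i = j then 1 / (c i) ^ 2 else 0)
    (hHerm : Q.IsHermitian) :
    (univ.filter fun i => 0 < hHerm.eigenvalues i).card = n + 1 ∧
    (univ.filter fun i => hHerm.eigenvalues i = 0).card = 0 ∧
    (univ.filter fun i => hHerm.eigenvalues i < 0).card = 1 := by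
  have hc₀ : ∀ i, c i ≠ 0 := fun i => (hc i).ne'
  obtain rfl : Q = arrowheadQ₁ c := ext fun i j => by simp [hQ, arrowheadQ₁]
  have hle := hHerm.card_eigenvalues_nonpos_le_one (LinearMap.proj 0)
    fun _ => arrowheadQ₁.dotProduct_mulVec_pos hc₀
  have hneg := hHerm.exists_eigenvalues_neg_of_dotProduct_mulVec_neg
    (arrowheadQ₁.dotProduct_mulVec_self_neg hc₀)
  simpa using card_filter_sign_of_card_nonpos_le_one hle hneg
end
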